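/- For every k ∈ ℕ there is a set A of n = 2·2^k + 1 points in ℝ^{2^k} with the ℓ₁ norm (namely 0, the standard basis vectors, and the rows of the 2^k × 2^k Walsh matrix) such that for every d-dimensional real normed space Y, every D ≥ 1, and every linear map T : ℝ^{2^k} → Y satisfying ‖u − v‖₁ ≤ ‖T(u) − T(v)‖_Y ≤ D·‖u − v‖₁ for all u, v ∈ A, one has D ≥ √((n−1)/(2d)). -/

import Mathlib

open scoped ENNReal

/-- The `2^k × 2^k` Walsh matrix, with rows and columns indexed by `Fin k → Bool`
(i.e. `𝔽₂^k`): its `(u, v)` entry is `(-1)^⟨u,v⟩` where `⟨u,v⟩ = #{i : uᵢ = vᵢ = 1}`.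
This is the `k`-fold Kronecker power of `[[1,1],[1,-1]]`. -/
noncomputable def walshRow (k : ℕ) (u : Fin k → Bool) : (Fin k → Bool) → ℝ :=
  fun v => (-1 : ℝ) ^ (Finset.univ.filter fun i => u i && v i).card

/-- The point set `A = {0} ∪ {wᵢ} ∪ {eᵢ} ⊆ ℝ^{2^k}` consisting of the origin, the rows of
the Walsh matrix, and the standard basis vectors, viewed inside `ℓ₁^{2^k}`. -/
noncomputable def walshPointSetL1 (k : ℕ) :
    Set (PiLp 1 fun _ : Fin k → Bool => ℝ) :=
  {0} ∪ Set.range (fun u => (WithLp.equiv 1 _).symm (walshRow k u)) ∪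
    Set.range (fun u : Fin k → Bool => (WithLp.equiv 1 _).symm (Pi.single u 1))

/-!
Put `w_u` for the Walsh rows and `e_v` for the basis vectors. Then `T w_u = ∑_v W_{uv} T e_v`.
Choose norming functionals `f_u` for the vectors `T w_u`. This gives
`4^k ≤ ∑_u ‖T w_u‖ = ∑_{u,v} W_{uv} B_{uv}` with `B_{uv} = f_u (T e_v)`. The matrix `B` factors
through `Y`, so it has rank at most `d`, and its entries are at most `D` in absolute value. Since
`W / √(2^k)` is orthogonal, expanding the columns of `B` in an orthonormal basis of its column
space and applying Cauchy–Schwarz bounds the pairing by `√(2^k d) ‖B‖_F ≤ √(2^k d) 2^k D`.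
Hence `2^k ≤ d D²`.
-/

open scoped RealInnerProductSpace

theorem sq_sum_inner_le_of_frame_bound {E κ : Type*} [NormedAddCommGroup E]
    [InnerProductSpace ℝ E] [Fintype κ] {K : Submodule ℝ E} [FiniteDimensional ℝ K]
    (h : κ → E) {m : ℝ} (hh : ∀ x, ∑ v, ⟪h v, x⟫ ^ 2 ≤ m * ‖x‖ ^ 2) (c : κ → K) :
    (∑ v, ⟪h v, c v⟫) ^ 2 ≤ m * Module.finrank ℝ K * ∑ v, ‖c v‖ ^ 2 := by
  let b := stdOrthonormalBasis ℝ K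
  have hexpand : ∀ v, ⟪h v, c v⟫ = ∑ j, ⟪h v, b j⟫ * ⟪b j, c v⟫ := fun v => by
    conv_lhs => rw [← b.sum_repr' (c v)]
    simp [inner_sum, inner_smul_right, mul_comm]
  have hframe : ∑ v, ∑ j, ⟪h v, b j⟫ ^ 2 ≤ m * Module.finrank ℝ K := by
    have hunit : ∀ j, ‖(b j : E)‖ = 1 := fun j => b.orthonormal.1 j
    rw [Finset.sum_comm]
    simpa [hunit, mul_comm] using Finset.sum_le_sum fun j (_ : j ∈ Finset.univ) => hh (b j)
  have hcoord : ∀ v, ∑ j, ⟪b j, c v⟫ ^ 2 = ‖c v‖ ^ 2 := fun v => by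
    rw [← b.sum_sq_inner_right (c v)]
  calc (∑ v, ⟪h v, c v⟫) ^ 2
      = (∑ p : κ × _, ⟪h p.1, b p.2⟫ * ⟪b p.2, c p.1⟫) ^ 2 := by
        simp_rw [hexpand, Fintype.sum_prod_type]
    _ ≤ (∑ p : κ × _, ⟪h p.1, b p.2⟫ ^ 2) * ∑ p : κ × _, ⟪b p.2, c p.1⟫ ^ 2 :=
        Finset.sum_mul_sq_le_sq_mul_sq _ _ _
    _ ≤ m * Module.finrank ℝ K * ∑ v, ‖c v‖ ^ 2 := by
        simp_rw [Fintype.sum_prod_type, hcoord]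
        gcongr

theorem sq_sum_mul_apply_le_of_frame_bound {Y ι κ : Type*} [AddCommGroup Y] [Module ℝ Y]
    [FiniteDimensional ℝ Y] [Fintype ι] [Fintype κ] (h : κ → EuclideanSpace ℝ ι) {m : ℝ}
    (hm : 0 ≤ m) (hh : ∀ x, ∑ v, ⟪h v, x⟫ ^ 2 ≤ m * ‖x‖ ^ 2) (f : ι → Y →ₗ[ℝ] ℝ) (y : κ → Y) :
    (∑ v, ∑ u, h v u * f u (y v)) ^ 2 ≤ m * Module.finrank ℝ Y * ∑ v, ∑ u, f u (y v) ^ 2 := by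
  let Φ : Y →ₗ[ℝ] EuclideanSpace ℝ ι :=
    (WithLp.linearEquiv 2 ℝ (ι → ℝ)).symm.toLinearMap ∘ₗ LinearMap.pi f
  let c : κ → LinearMap.range Φ := fun v => ⟨Φ (y v), LinearMap.mem_range_self Φ (y v)⟩
  have hinner : ∀ v, ⟪h v, (c v : EuclideanSpace ℝ ι)⟫ = ∑ u, h v u * f u (y v) := fun v => by
    simp [c, Φ, PiLp.inner_apply, mul_comm]
  have hnorm : ∀ v, ‖c v‖ ^ 2 = ∑ u, f u (y v) ^ 2 := fun v => by
    simp [c, Φ, EuclideanSpace.real_norm_sq_eq]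
  have hrank : (Module.finrank ℝ (LinearMap.range Φ) : ℝ) ≤ Module.finrank ℝ Y := by
    exact_mod_cast LinearMap.finrank_range_le Φ
  calc (∑ v, ∑ u, h v u * f u (y v)) ^ 2 = (∑ v, ⟪h v, (c v : EuclideanSpace ℝ ι)⟫) ^ 2 := by
        simp_rw [hinner]
    _ ≤ m * Module.finrank ℝ (LinearMap.range Φ) * ∑ v, ‖c v‖ ^ 2 :=
        sq_sum_inner_le_of_frame_bound h hh c
    _ ≤ m * Module.finrank ℝ Y * ∑ v, ∑ u, f u (y v) ^ 2 := by
        simp_rw [hnorm]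
        gcongr

theorem sq_sum_norm_sum_smul_le_of_frame_bound {Y ι κ : Type*} [NormedAddCommGroup Y]
    [NormedSpace ℝ Y] [FiniteDimensional ℝ Y] [Fintype ι] [Fintype κ]
    (h : κ → EuclideanSpace ℝ ι) {m : ℝ} (hm : 0 ≤ m) (hh : ∀ x, ∑ v, ⟪h v, x⟫ ^ 2 ≤ m * ‖x‖ ^ 2)
    (y : κ → Y) {D : ℝ} (hy : ∀ v, ‖y v‖ ≤ D) :
    (∑ u, ‖∑ v, h v u • y v‖) ^ 2 ≤
      m * Module.finrank ℝ Y * (Fintype.card κ * Fintype.card ι * D ^ 2) := by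
  choose f hf_norm hf_apply using fun u => exists_dual_vector'' ℝ (∑ v, h v u • y v)
  have hpair : ∑ u, ‖∑ v, h v u • y v‖ = ∑ v, ∑ u, h v u * f u (y v) := by
    rw [Finset.sum_comm]
    refine Finset.sum_congr rfl fun u _ => ?_
    simpa [map_sum, map_smul] using (hf_apply u).symm
  have hentry : ∀ u v, f u (y v) ^ 2 ≤ D ^ 2 := fun u v => by
    have hle := ((f u).le_of_opNorm_le (hf_norm u) (y v)).trans (by simpa using hy v)
    rw [Real.norm_eq_abs] at hle
    exact sq_le_sq' (abs_le.mp hle).1 (abs_le.mp hle).2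
  calc (∑ u, ‖∑ v, h v u • y v‖) ^ 2
      ≤ m * Module.finrank ℝ Y * ∑ v, ∑ u, f u (y v) ^ 2 := by
        simpa [hpair] using
          sq_sum_mul_apply_le_of_frame_bound h hm hh (fun u => (f u : Y →ₗ[ℝ] ℝ)) y
    _ ≤ m * Module.finrank ℝ Y * ∑ _v : κ, ∑ _u : ι, D ^ 2 := by
        exact mul_le_mul_of_nonneg_left
          (Finset.sum_le_sum fun v _ => Finset.sum_le_sum fun u _ => hentry u v) (by positivity)
    _ = m * Module.finrank ℝ Y * (Fintype.card κ * Fintype.card ι * D ^ 2) := by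
        simp [mul_assoc]

theorem LinearMap.map_toLp_eq_sum_smul {ι Y : Type*} [Fintype ι] [DecidableEq ι] [AddCommGroup Y]
    [Module ℝ Y] (p : ℝ≥0∞) (T : PiLp p (fun _ : ι => ℝ) →ₗ[ℝ] Y) (x : ι → ℝ) :
    T (WithLp.toLp p x) = ∑ i, x i • T (WithLp.toLp p (Pi.single i 1)) := by
  conv_lhs => rw [pi_eq_sum_univ' x]
  simp [WithLp.toLp_sum, WithLp.toLp_smul]

theorem walshRow_comm (k : ℕ) (u v : Fin k → Bool) : walshRow k u v = walshRow k v u := by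
  simp [walshRow, Bool.and_comm]

theorem abs_walshRow (k : ℕ) (u v : Fin k → Bool) : |walshRow k u v| = 1 := by
  simp [walshRow]

theorem walshRow_eq_prod (k : ℕ) (u v : Fin k → Bool) :
    walshRow k u v = ∏ i, (if u i && v i then (-1 : ℝ) else 1) := by
  rw [walshRow, Finset.prod_ite, Finset.prod_const, Finset.prod_const, one_pow, mul_one]

theorem sum_walshRow_mul_walshRow (k : ℕ) (u u' : Fin k → Bool) :
    ∑ v, walshRow k u v * walshRow k u' v = if u = u' then (2 : ℝ) ^ k else 0 := by
  have hcoord : ∀ i, ∑ b : Bool,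
      (if u i && b then (-1 : ℝ) else 1) * (if u' i && b then (-1 : ℝ) else 1) =
        if u i = u' i then 2 else 0 := fun i => by
    cases u i <;> cases u' i <;> norm_num
  simp_rw [walshRow_eq_prod, ← Finset.prod_mul_distrib]
  rw [← Fintype.prod_sum fun i b =>
    (if u i && b then (-1 : ℝ) else 1) * (if u' i && b then (-1 : ℝ) else 1)]
  simp_rw [hcoord]
  split_ifs with huu'
  · simp [huu']
  · obtain ⟨i, hi⟩ := Function.ne_iff.mp huu'
    exact Finset.prod_eq_zero (Finset.mem_univ i) (if_neg hi)

theorem sum_inner_walshRow_sq (k : ℕ) (x : EuclideanSpace ℝ (Fin k → Bool)) :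
    ∑ v, ⟪WithLp.toLp 2 (walshRow k v), x⟫ ^ 2 = 2 ^ k * ‖x‖ ^ 2 := by
  have hinner : ∀ v, ⟪WithLp.toLp 2 (walshRow k v), x⟫ = ∑ u, x u * walshRow k u v := fun v => by
    simp [PiLp.inner_apply, walshRow_comm k v]
  calc ∑ v, ⟪WithLp.toLp 2 (walshRow k v), x⟫ ^ 2
      = ∑ u, ∑ u', x u * x u' * ∑ v, walshRow k u v * walshRow k u' v := by
        simp_rw [hinner, sq, Finset.sum_mul_sum, Finset.mul_sum]
        rw [Finset.sum_comm]
        refine Finset.sum_congr rfl fun u _ => Finset.sum_comm.trans ?_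
        refine Finset.sum_congr rfl fun u' _ => Finset.sum_congr rfl fun v _ => by ring
    _ = 2 ^ k * ‖x‖ ^ 2 := by
        rw [EuclideanSpace.real_norm_sq_eq, Finset.mul_sum]
        simp [sum_walshRow_mul_walshRow, sq, mul_comm]

theorem two_pow_le_finrank_mul_sq {Y : Type*} [NormedAddCommGroup Y] [NormedSpace ℝ Y]
    [FiniteDimensional ℝ Y] {k : ℕ} (T : PiLp 1 (fun _ : Fin k → Bool => ℝ) →ₗ[ℝ] Y) {D : ℝ}
    (hTe : ∀ v, ‖T (WithLp.toLp 1 (Pi.single v 1))‖ ≤ D)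
    (hTw : ∀ u, 2 ^ k ≤ ‖T (WithLp.toLp 1 (walshRow k u))‖) :
    (2 : ℝ) ^ k ≤ Module.finrank ℝ Y * D ^ 2 := by
  set m : ℝ := 2 ^ k
  have hcols : ∀ u, T (WithLp.toLp 1 (walshRow k u)) =
      ∑ v, (WithLp.toLp 2 (walshRow k v)) u • T (WithLp.toLp 1 (Pi.single v 1)) := fun u => by
    rw [T.map_toLp_eq_sum_smul]
    exact Finset.sum_congr rfl fun v _ => by rw [walshRow_comm]
  have hlow : m * m ≤ ∑ u, ‖T (WithLp.toLp 1 (walshRow k u))‖ := by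
    simpa [m] using Finset.sum_le_sum fun u (_ : u ∈ Finset.univ) => hTw u
  have hup := sq_sum_norm_sum_smul_le_of_frame_bound _ (by positivity)
    (fun x => (sum_inner_walshRow_sq k x).le) _ hTe
  simp only [← hcols, Fintype.card_fun, Fintype.card_bool, Fintype.card_fin] at hup
  push_cast at hup
  refine le_of_mul_le_mul_left ?_ (by positivity : 0 < m ^ 3)
  calc m ^ 3 * m = (m * m) ^ 2 := by ring
    _ ≤ (∑ u, ‖T (WithLp.toLp 1 (walshRow k u))‖) ^ 2 := by gcongr
    _ ≤ m * Module.finrank ℝ Y * (m * m * D ^ 2) := hup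
    _ = m ^ 3 * (Module.finrank ℝ Y * D ^ 2) := by ring

/-- For every `k` consider the `n = 2·2^k + 1` point subset
`A = {0} ∪ {walsh rows} ∪ {standard basis}` of `ℓ₁^{2^k}`.  For every `d`-dimensional
normed space `Y`, any linear map `T : ℓ₁^{2^k} → Y` which is non-contracting and
`D`-Lipschitz on `A` satisfies `D ≥ √((n-1)/(2d)) = √(2^k/d)`. -/
theorem stmt_7 (k d : ℕ) (Y : Type) [NormedAddCommGroup Y] [NormedSpace ℝ Y]
    [FiniteDimensional ℝ Y] (hY : Module.finrank ℝ Y = d)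
    (D : ℝ) (hD : 1 ≤ D)
    (T : PiLp 1 (fun _ : Fin k → Bool => ℝ) →ₗ[ℝ] Y)
    (hT : ∀ u ∈ walshPointSetL1 k, ∀ v ∈ walshPointSetL1 k,
      ‖u - v‖ ≤ ‖T u - T v‖ ∧ ‖T u - T v‖ ≤ D * ‖u - v‖) :
    Real.sqrt ((2 : ℝ) ^ k / d) ≤ D := by
  have hTA : ∀ a ∈ walshPointSetL1 k, ‖a‖ ≤ ‖T a‖ ∧ ‖T a‖ ≤ D * ‖a‖ := fun a ha => by
    simpa using hT a ha 0 (Or.inl (Or.inl rfl))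
  have hTe : ∀ v, ‖T (WithLp.toLp 1 (Pi.single v 1))‖ ≤ D := fun v => by
    simpa [PiLp.norm_eq_of_L1, Pi.single_apply] using (hTA _ (Or.inr ⟨v, rfl⟩)).2
  have hTw : ∀ u, 2 ^ k ≤ ‖T (WithLp.toLp 1 (walshRow k u))‖ := fun u => by
    simpa [PiLp.norm_eq_of_L1, abs_walshRow] using (hTA _ (Or.inl (Or.inr ⟨u, rfl⟩))).1
  have hdim := two_pow_le_finrank_mul_sq T hTe hTw
  rw [hY] at hdim
  rw [Real.sqrt_le_left (by linarith)]
  exact div_le_of_le_mul₀ (Nat.cast_nonneg d) (by positivity) (by linarith)
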